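/- arXiv:1401.3583 — 3 statements merged into one kernel-verified Lean document; each statement's English description precedes it below -/
import Mathlib

section
/- Fix 0 < a < b, β > 0, M > 0, H ∈ (0,1) and c_H > 0. For N, k ∈ ℕ set I_k^N = [k·2^{−N/H}, (k+1)·2^{−N/H}]. Suppose there exists N₁ ∈ ℕ such that for all z ∈ [−M, M]ⁿ, all ε > 0, all N ≥ N₁ and all k with I_k^N ⊆ [a, b], one has ℙ( {ω : ∃ t ∈ I_k^N, |u_t(ω) − z| < ε} ) ≤ c_H · ε^β, where |·| is the Euclidean norm on ℝⁿ. Then there exists a constant C > 0 (depending on a, b, β, M, H, n) such that for every Borel set A ⊆ [−M, M]ⁿ, ℙ( {ω : ∃ t ∈ [a,b], u_t(ω) ∈ A} ) ≤ C · ℋ_{β − 1/H}(A). -/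
/-!
Split `[a, b]` into its endpoints and the increasing windows `[a + δ_N, b - δ_N]`,
`δ_N = 2^{-N/H}`. A set `s` of diameter `ε` lies in a ball of radius `ε`, so hitting `s` is
controlled by hitting a ball of radius `2ε`. On a window, a grid of step `δ ≤ δ_N` with
`ε ≤ δ^H` covers it by at most `b/δ + 1 ≤ b ε^{-1/H} + 1` grid intervals inside `[a, b]`, whence
the bound `C ε^{β - 1/H}`. At an endpoint, continuity of the paths makes the hitting event an
increasing union of events each contained in the hitting event of one grid interval next to the
endpoint. Bounds `C (diam s)^{β - 1/H}` for all `s` of small diameter give the bound by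
`C ℋ_{β - 1/H}`, and the admissible diameter may depend on the window because `ℋ_{β - 1/H}` is a
supremum over all diameter thresholds. When `β - 1/H ≤ 0`, `ℋ_{β - 1/H}` of a nonempty set is at
least `1`.
-/

open MeasureTheory Set ENNReal Filter Topology Metric

section Hitting

variable {Ω X : Type*}

def hittingSet (u : ℝ → Ω → X) (I : Set ℝ) (s : Set X) : Set Ω :=
  {ω | ∃ t ∈ I, u t ω ∈ s}

theorem hittingSet_mono {u : ℝ → Ω → X} {I J : Set ℝ} {s s' : Set X} (hIJ : I ⊆ J)
    (hs : s ⊆ s') : hittingSet u I s ⊆ hittingSet u J s' :=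
  fun _ ⟨t, ht, hts⟩ => ⟨t, hIJ ht, hs hts⟩

theorem hittingSet_union (u : ℝ → Ω → X) (I J : Set ℝ) (s : Set X) :
    hittingSet u (I ∪ J) s = hittingSet u I s ∪ hittingSet u J s := by
  ext ω
  simp [hittingSet, or_and_right, exists_or]

theorem hittingSet_iUnion_left {ι : Sort*} (u : ℝ → Ω → X) (I : ι → Set ℝ) (s : Set X) :
    hittingSet u (⋃ i, I i) s = ⋃ i, hittingSet u (I i) s := by
  ext ω
  simp only [hittingSet, mem_iUnion]
  aesop

theorem hittingSet_iUnion_right {ι : Sort*} (u : ℝ → Ω → X) (I : Set ℝ) (s : ι → Set X) :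
    hittingSet u I (⋃ i, s i) = ⋃ i, hittingSet u I (s i) := by
  ext ω
  simp only [hittingSet, mem_iUnion]
  aesop

variable [MeasurableSpace Ω]

def hittingOuterMeasure (μ : Measure Ω) (u : ℝ → Ω → X) (I : Set ℝ) : OuterMeasure X where
  measureOf s := μ (hittingSet u I s)
  empty := by simp [hittingSet]
  mono hs := measure_mono (hittingSet_mono subset_rfl hs)
  iUnion_nat s _ := by
    rw [hittingSet_iUnion_right]
    exact measure_iUnion_le _

end Hitting

theorem exists_grid_Icc_subset_Icc {c δ : ℝ} (hc : 0 ≤ c) (hδ : 0 < δ) :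
    ∃ k : ℕ, Icc (k * δ) ((k + 1) * δ) ⊆ Icc c (c + 2 * δ) := by
  refine ⟨⌈c / δ⌉₊, Icc_subset_Icc ?_ ?_⟩
  · exact (div_le_iff₀ hδ).1 (Nat.le_ceil _)
  · have := mul_lt_mul_of_pos_right (Nat.ceil_lt_add_one (div_nonneg hc hδ.le)) hδ
    rw [add_mul, div_mul_cancel₀ _ hδ.ne'] at this
    linarith

theorem exists_grid_Icc_subset_Icc_inter {a b t₀ δ : ℝ} (ha : 0 ≤ a) (ht₀ : t₀ ∈ Icc a b)
    (hδ : 0 < δ) (hδab : 4 * δ ≤ b - a) :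
    ∃ k : ℕ, Icc (k * δ) ((k + 1) * δ) ⊆ Icc a b ∩ Icc (t₀ - 2 * δ) (t₀ + 2 * δ) := by
  by_cases hright : t₀ + 2 * δ ≤ b
  · obtain ⟨k, hk⟩ := exists_grid_Icc_subset_Icc (ha.trans ht₀.1) hδ
    refine ⟨k, subset_inter (hk.trans (Icc_subset_Icc ht₀.1 hright)) (hk.trans ?_)⟩
    exact Icc_subset_Icc (by linarith) le_rfl
  · have hleft : a ≤ t₀ - 2 * δ := by linarith
    obtain ⟨k, hk⟩ := exists_grid_Icc_subset_Icc (ha.trans hleft) hδ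
    refine ⟨k, subset_inter (hk.trans (Icc_subset_Icc hleft (by linarith [ht₀.2])))
      (hk.trans (Icc_subset_Icc le_rfl (by linarith)))⟩

open Classical in
theorem Icc_add_sub_subset_biUnion_grid {a b w δ : ℝ} (ha : 0 ≤ a) (hδ : 0 < δ) (hδw : δ ≤ w) :
    Icc (a + w) (b - w) ⊆ ⋃ k ∈ (Finset.range (⌊b / δ⌋₊ + 1)).filter
      (fun k : ℕ => Icc (k * δ) ((k + 1) * δ) ⊆ Icc a b), Icc (k * δ) ((k + 1) * δ) := by
  intro t ⟨hat, htb⟩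
  have ht : 0 ≤ t / δ := div_nonneg (by linarith) hδ.le
  have hlow : ⌊t / δ⌋₊ * δ ≤ t := (le_div_iff₀ hδ).1 (Nat.floor_le ht)
  have hup : t < (⌊t / δ⌋₊ + 1) * δ := (div_lt_iff₀ hδ).1 (Nat.lt_floor_add_one _)
  refine mem_biUnion (x := ⌊t / δ⌋₊) (Finset.mem_filter.2 ⟨?_, ?_⟩) ⟨hlow, hup.le⟩
  · exact Finset.mem_range_succ_iff.2 (Nat.floor_mono (by gcongr; linarith))
  · exact Icc_subset_Icc (by linarith) (by linarith)

theorem Icc_subset_union_iUnion_Icc {a b : ℝ} {δ : ℕ → ℝ} (hδ : Tendsto δ atTop (𝓝 0)) :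
    Icc a b ⊆ {a} ∪ {b} ∪ ⋃ N, Icc (a + δ N) (b - δ N) := by
  rintro t ⟨hat, htb⟩
  rcases hat.eq_or_lt with rfl | hat
  · exact Or.inl (Or.inl rfl)
  rcases htb.eq_or_lt with rfl | htb
  · exact Or.inl (Or.inr rfl)
  obtain ⟨N, hN⟩ :=
    (hδ.eventually (gt_mem_nhds (lt_min (sub_pos.2 hat) (sub_pos.2 htb)))).exists
  have := min_le_left (t - a) (b - t)
  have := min_le_right (t - a) (b - t)
  exact Or.inr (mem_iUnion.2 ⟨N, by linarith, by linarith⟩)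

section Grid

variable {Ω X : Type*} [MeasurableSpace Ω] (μ : Measure Ω) (u : ℝ → Ω → X)

open Classical in
theorem measure_hittingSet_Icc_le_of_grid (s : Set X) {a b w δ : ℝ} {p : ℝ≥0∞} (ha : 0 ≤ a)
    (hb : 0 ≤ b) (hδ : 0 < δ) (hδw : δ ≤ w)
    (hgrid : ∀ k : ℕ, Icc (k * δ) ((k + 1) * δ) ⊆ Icc a b →
      μ (hittingSet u (Icc (k * δ) ((k + 1) * δ)) s) ≤ p) :
    μ (hittingSet u (Icc (a + w) (b - w)) s) ≤ ENNReal.ofReal (b / δ + 1) * p := by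
  set S := (Finset.range (⌊b / δ⌋₊ + 1)).filter
    (fun k : ℕ => Icc (k * δ) ((k + 1) * δ) ⊆ Icc a b)
  have hcard : (S.card : ℝ≥0∞) ≤ ENNReal.ofReal (b / δ + 1) := by
    rw [← ofReal_natCast]
    refine ofReal_le_ofReal ?_
    calc (S.card : ℝ) ≤ (⌊b / δ⌋₊ + 1 : ℕ) := by
          exact_mod_cast (Finset.card_filter_le _ _).trans (Finset.card_range _).le
      _ ≤ b / δ + 1 := by
          push_cast
          gcongr
          exact Nat.floor_le (div_nonneg hb hδ.le)
  calc μ (hittingSet u (Icc (a + w) (b - w)) s)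
      ≤ μ (⋃ k ∈ S, hittingSet u (Icc (k * δ) ((k + 1) * δ)) s) := by
        refine measure_mono ((hittingSet_mono (Icc_add_sub_subset_biUnion_grid ha hδ hδw)
          subset_rfl).trans ?_)
        simp only [hittingSet_iUnion_left]
        exact subset_rfl
    _ ≤ ∑ k ∈ S, μ (hittingSet u (Icc (k * δ) ((k + 1) * δ)) s) := measure_biUnion_finset_le _ _
    _ ≤ S.card • p := Finset.sum_le_card_nsmul _ _ _ fun k hk => hgrid k (Finset.mem_filter.1 hk).2
    _ ≤ ENNReal.ofReal (b / δ + 1) * p := by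
        rw [nsmul_eq_mul]
        gcongr

theorem measure_hittingSet_singleton_le_of_grid [TopologicalSpace X] {U : Set X} (hU : IsOpen U)
    {a b t₀ : ℝ} {p : ℝ≥0∞} {δ : ℕ → ℝ} (hδ_pos : ∀ N, 0 < δ N) (hδ_anti : Antitone δ)
    (hδ_lim : Tendsto δ atTop (𝓝 0)) (ha : 0 ≤ a) (hab : a < b) (ht₀ : t₀ ∈ Icc a b)
    (hcont : ∀ ω, ContinuousWithinAt (u · ω) (Icc a b) t₀)
    (hgrid : ∀ᶠ N in atTop, ∀ k : ℕ, Icc (k * δ N) ((k + 1) * δ N) ⊆ Icc a b →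
      μ (hittingSet u (Icc (k * δ N) ((k + 1) * δ N)) U) ≤ p) :
    μ (hittingSet u {t₀} U) ≤ p := by
  set G : ℕ → Set Ω := fun N =>
    {ω | ∀ t ∈ Icc a b ∩ Icc (t₀ - 2 * δ N) (t₀ + 2 * δ N), u t ω ∈ U}
  have hG_mono : Monotone G := fun N N' hNN' ω hω t ht => by
    have := hδ_anti hNN'
    exact hω t ⟨ht.1, by linarith [ht.2.1], by linarith [ht.2.2]⟩
  have hsub : hittingSet u {t₀} U ⊆ ⋃ N, G N := by
    rintro ω ⟨_, rfl, hω⟩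
    obtain ⟨η, hη, hball⟩ := Metric.mem_nhdsWithin_iff.1 (hcont ω (hU.mem_nhds hω))
    obtain ⟨N, hN⟩ := (hδ_lim.eventually (gt_mem_nhds (half_pos hη))).exists
    refine mem_iUnion.2 ⟨N, fun t ht => hball ⟨?_, ht.1⟩⟩
    rw [mem_ball, Real.dist_eq, abs_lt]
    constructor <;> linarith [ht.2.1, ht.2.2]
  have hG_le : ∀ᶠ N in atTop, μ (G N) ≤ p := by
    filter_upwards [hgrid, hδ_lim.eventually (gt_mem_nhds (show 0 < (b - a) / 4 by linarith))]
      with N hN hsmall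
    obtain ⟨k, hk⟩ := exists_grid_Icc_subset_Icc_inter ha ht₀ (hδ_pos N) (by linarith)
    have hleft : (k : ℝ) * δ N ∈ Icc (k * δ N) ((k + 1) * δ N) :=
      ⟨le_rfl, by linarith [hδ_pos N]⟩
    have hGk : G N ⊆ hittingSet u (Icc (k * δ N) ((k + 1) * δ N)) U :=
      fun ω hω => ⟨_, hleft, hω _ (hk hleft)⟩
    exact (measure_mono hGk).trans (hN k (hk.trans inter_subset_left))
  calc μ (hittingSet u {t₀} U) ≤ μ (⋃ N, G N) := measure_mono hsub
    _ ≤ p := le_of_tendsto (tendsto_measure_iUnion_atTop hG_mono) hG_le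

end Grid

section Hausdorff

variable {X : Type*} [MetricSpace X] [MeasurableSpace X] [BorelSpace X]

theorem MeasureTheory.Measure.one_le_hausdorffMeasure_of_nonpos {d : ℝ} (hd : d ≤ 0) {A : Set X}
    (hA : A.Nonempty) : 1 ≤ μH[d] A :=
  (Measure.one_le_hausdorffMeasure_zero_of_nonempty hA).trans (Measure.hausdorffMeasure_mono hd A)

theorem le_ofReal_mul_rpow_of_forall_lt {y : ℝ≥0∞} {x C d r : ℝ} (hd : 0 < d)
    (hxr : x < r) (h : ∀ ε, x < ε → ε < r → y ≤ ENNReal.ofReal (C * ε ^ d)) :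
    y ≤ ENNReal.ofReal (C * x ^ d) := by
  have hlim : Tendsto (fun ε => ENNReal.ofReal (C * ε ^ d)) (𝓝[>] x)
      (𝓝 (ENNReal.ofReal (C * x ^ d))) :=
    ((ENNReal.continuous_ofReal.tendsto _).comp
      (((Real.continuousAt_rpow_const x d (Or.inr hd.le)).const_mul C))).mono_left
      nhdsWithin_le_nhds
  refine ge_of_tendsto hlim ?_
  filter_upwards [Ioo_mem_nhdsGT hxr] with ε hε using h ε hε.1 hε.2

theorem MeasureTheory.OuterMeasure.le_ofReal_mul_hausdorffMeasure_of_closedBall (ν : OuterMeasure X)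
    {K A : Set X} (hA : A ⊆ K) {C d r : ℝ} (hC : 0 < C) (hd : 0 < d) (hr : 0 < r)
    (hball : ∀ z ∈ K, ∀ ε, 0 < ε → ε ≤ r → ν (closedBall z ε) ≤ ENNReal.ofReal (C * ε ^ d)) :
    ν A ≤ ENNReal.ofReal C * μH[d] A := by
  -- the threshold `r / 2` leaves room to let `ε` decrease to `diam s` inside `(diam s, r)`
  have hsmall : ∀ s, ediam s ≤ ENNReal.ofReal (r / 2) →
      OuterMeasure.restrict K ν s ≤ (ENNReal.ofReal C • fun x : ℝ≥0∞ => x ^ d) (ediam s) := by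
    intro s hs
    rw [OuterMeasure.restrict_apply]
    rcases (s ∩ K).eq_empty_or_nonempty with hsK | ⟨z, hzs, hzK⟩
    · simp [hsK]
    have hs_top : ediam s ≠ ⊤ := ne_top_of_le_ne_top ofReal_ne_top hs
    have hs_r : (ediam s).toReal < r :=
      (toReal_le_of_le_ofReal (by positivity) hs).trans_lt (half_lt_self hr)
    have key := le_ofReal_mul_rpow_of_forall_lt (y := ν (s ∩ K)) (C := C) hd hs_r
      fun ε hε hεr => by
        refine (ν.mono fun x hx => ?_).trans (hball z hzK ε (toReal_nonneg.trans_lt hε) hεr.le)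
        rw [mem_closedBall, dist_edist]
        exact (toReal_mono hs_top (edist_le_ediam_of_mem hx.1 hzs)).trans hε.le
    rwa [ENNReal.ofReal_mul hC.le, ← ofReal_rpow_of_nonneg toReal_nonneg hd.le,
      ofReal_toReal hs_top] at key
  have hle := OuterMeasure.le_mkMetric _ _ _ (by positivity) hsmall
  rw [OuterMeasure.mkMetric_smul _ ofReal_ne_top (ofReal_pos.2 hC).ne'] at hle
  calc ν A = OuterMeasure.restrict K ν A := by rw [OuterMeasure.restrict_apply, inter_eq_left.2 hA]
    _ ≤ ENNReal.ofReal C * μH[d] A := by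
      simpa [OuterMeasure.coe_mkMetric, Measure.hausdorffMeasure] using hle A

end Hausdorff

theorem div_add_one_mul_rpow_le {b c β H δ ε : ℝ} (hb : 0 ≤ b) (hc : 0 ≤ c) (hH : 0 < H)
    (hε : 0 < ε) (hδ : 0 < δ) (hδ1 : δ ≤ 1) (hεδ : ε ≤ δ ^ H) :
    (b / δ + 1) * (c * (2 * ε) ^ β) ≤ (b + 1) * c * 2 ^ β * ε ^ (β - 1 / H) := by
  have hε1 : ε ≤ 1 := hεδ.trans (Real.rpow_le_one hδ.le hδ1 hH.le)
  have hεH : ε ^ (1 / H) ≤ δ := by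
    calc ε ^ (1 / H) ≤ (δ ^ H) ^ (1 / H) := Real.rpow_le_rpow hε.le hεδ (by positivity)
      _ = δ := by rw [← Real.rpow_mul hδ.le, mul_one_div_cancel hH.ne', Real.rpow_one]
  have hinv : 1 / δ * ε ^ β ≤ ε ^ (β - 1 / H) := by
    rw [sub_eq_neg_add, Real.rpow_add hε, Real.rpow_neg hε.le, ← one_div]
    gcongr
  have hβ : ε ^ β ≤ ε ^ (β - 1 / H) :=
    Real.rpow_le_rpow_of_exponent_ge hε hε1 (by linarith [one_div_pos.2 hH])
  rw [Real.mul_rpow two_pos.le hε.le]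
  calc (b / δ + 1) * (c * (2 ^ β * ε ^ β)) = c * 2 ^ β * (b * (1 / δ * ε ^ β) + ε ^ β) := by ring
    _ ≤ c * 2 ^ β * (b * ε ^ (β - 1 / H) + ε ^ (β - 1 / H)) := by gcongr
    _ = (b + 1) * c * 2 ^ β * ε ^ (β - 1 / H) := by ring

section GridBound

variable {Ω X : Type*} [MeasurableSpace Ω] [MetricSpace X] [MeasurableSpace X] [BorelSpace X]

def GridHittingBound (μ : Measure Ω) (u : ℝ → Ω → X) (K : Set X) (a b β c : ℝ) (δ : ℕ → ℝ)
    (N₁ : ℕ) : Prop :=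
  ∀ z ∈ K, ∀ ε, 0 < ε → ∀ N, N₁ ≤ N → ∀ k : ℕ, Icc (k * δ N) ((k + 1) * δ N) ⊆ Icc a b →
    μ (hittingSet u (Icc (k * δ N) ((k + 1) * δ N)) (ball z ε)) ≤ ENNReal.ofReal (c * ε ^ β)

variable {μ : Measure Ω} {u : ℝ → Ω → X} {K A : Set X} {a b β H c : ℝ} {δ : ℕ → ℝ} {N₁ : ℕ}

theorem GridHittingBound.measure_singleton_le (hgrid : GridHittingBound μ u K a b β c δ N₁)
    {t₀ : ℝ} (ht₀ : t₀ ∈ Icc a b) (hcont : ∀ ω, ContinuousWithinAt (u · ω) (Icc a b) t₀)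
    (ha : 0 ≤ a) (hab : a < b) (hH : 0 < H) (hc : 0 < c) (hd : 0 < β - 1 / H)
    (hδ_pos : ∀ N, 0 < δ N) (hδ_anti : Antitone δ) (hδ_lim : Tendsto δ atTop (𝓝 0))
    (hA : A ⊆ K) :
    μ (hittingSet u {t₀} A) ≤ ENNReal.ofReal ((b + 1) * c * 2 ^ β) * μH[β - 1 / H] A := by
  have hb : 0 < b := ha.trans_lt hab
  refine (hittingOuterMeasure μ u {t₀}).le_ofReal_mul_hausdorffMeasure_of_closedBall hA
    (by positivity) hd one_pos fun z hz ε hε hε1 => ?_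
  calc μ (hittingSet u {t₀} (closedBall z ε))
      ≤ μ (hittingSet u {t₀} (ball z (2 * ε))) :=
        measure_mono (hittingSet_mono subset_rfl (closedBall_subset_ball (by linarith)))
    _ ≤ ENNReal.ofReal (c * (2 * ε) ^ β) :=
        measure_hittingSet_singleton_le_of_grid μ u isOpen_ball hδ_pos hδ_anti hδ_lim ha hab
          ht₀ hcont ((eventually_ge_atTop N₁).mono
            fun N hN k hk => hgrid z hz _ (by positivity) N hN k hk)
    _ ≤ ENNReal.ofReal ((b + 1) * c * 2 ^ β * ε ^ (β - 1 / H)) := by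
        -- the counting bound with `δ = 1`, i.e. for a single grid interval
        refine ofReal_le_ofReal (le_trans ?_ (div_add_one_mul_rpow_le hb.le hc.le hH hε
          one_pos le_rfl (by rwa [Real.one_rpow])))
        exact le_mul_of_one_le_left (by positivity) (by linarith [div_nonneg hb.le zero_le_one])

theorem GridHittingBound.measure_Icc_add_sub_le (hgrid : GridHittingBound μ u K a b β c δ N₁)
    (N : ℕ) (ha : 0 ≤ a) (hb : 0 ≤ b) (hH : 0 < H) (hc : 0 < c) (hd : 0 < β - 1 / H)
    (hδ_pos : ∀ N, 0 < δ N) (hδ_le_one : ∀ N, δ N ≤ 1) (hδ_anti : Antitone δ) (hA : A ⊆ K) :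
    μ (hittingSet u (Icc (a + δ N) (b - δ N)) A) ≤
      ENNReal.ofReal ((b + 1) * c * 2 ^ β) * μH[β - 1 / H] A := by
  set δ' := δ (max N₁ N)
  have hδ' : 0 < δ' := hδ_pos _
  refine (hittingOuterMeasure μ u _).le_ofReal_mul_hausdorffMeasure_of_closedBall hA
    (by positivity) hd (Real.rpow_pos_of_pos hδ' H) fun z hz ε hε hεr => ?_
  calc μ (hittingSet u (Icc (a + δ N) (b - δ N)) (closedBall z ε))
      ≤ μ (hittingSet u (Icc (a + δ N) (b - δ N)) (ball z (2 * ε))) :=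
        measure_mono (hittingSet_mono subset_rfl (closedBall_subset_ball (by linarith)))
    _ ≤ ENNReal.ofReal (b / δ' + 1) * ENNReal.ofReal (c * (2 * ε) ^ β) :=
        measure_hittingSet_Icc_le_of_grid μ u _ ha hb hδ' (hδ_anti (le_max_right _ _))
          (hgrid z hz _ (by positivity) _ (le_max_left _ _))
    _ ≤ ENNReal.ofReal ((b + 1) * c * 2 ^ β * ε ^ (β - 1 / H)) := by
        rw [← ofReal_mul (by positivity)]
        exact ofReal_le_ofReal (div_add_one_mul_rpow_le hb hc.le hH hε hδ' (hδ_le_one _) hεr)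

theorem GridHittingBound.measure_Icc_le (hgrid : GridHittingBound μ u K a b β c δ N₁)
    (hcont : ∀ ω, ContinuousOn (u · ω) (Icc a b)) (ha : 0 ≤ a) (hab : a < b) (hH : 0 < H)
    (hc : 0 < c) (hd : 0 < β - 1 / H) (hδ_pos : ∀ N, 0 < δ N) (hδ_le_one : ∀ N, δ N ≤ 1)
    (hδ_anti : Antitone δ) (hδ_lim : Tendsto δ atTop (𝓝 0)) (hA : A ⊆ K) :
    μ (hittingSet u (Icc a b) A) ≤
      ENNReal.ofReal (3 * ((b + 1) * c * 2 ^ β)) * μH[β - 1 / H] A := by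
  set C := (b + 1) * c * 2 ^ β
  have hend : ∀ t₀ ∈ Icc a b, μ (hittingSet u {t₀} A) ≤ ENNReal.ofReal C * μH[β - 1 / H] A :=
    fun t₀ ht₀ => hgrid.measure_singleton_le ht₀ (fun ω => hcont ω t₀ ht₀) ha hab hH hc hd
      hδ_pos hδ_anti hδ_lim hA
  have hcover : hittingSet u (Icc a b) A ⊆ hittingSet u {a} A ∪ hittingSet u {b} A ∪
      ⋃ N, hittingSet u (Icc (a + δ N) (b - δ N)) A := by
    rw [← hittingSet_union, ← hittingSet_iUnion_left, ← hittingSet_union]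
    exact hittingSet_mono (Icc_subset_union_iUnion_Icc hδ_lim) subset_rfl
  have hmono : Monotone fun N => hittingSet u (Icc (a + δ N) (b - δ N)) A := fun N N' hNN' =>
    hittingSet_mono (Icc_subset_Icc (by linarith [hδ_anti hNN']) (by linarith [hδ_anti hNN']))
      subset_rfl
  calc μ (hittingSet u (Icc a b) A)
      ≤ μ (hittingSet u {a} A) + μ (hittingSet u {b} A) +
          μ (⋃ N, hittingSet u (Icc (a + δ N) (b - δ N)) A) :=
        (measure_mono hcover).trans
          ((measure_union_le _ _).trans (add_le_add_left (measure_union_le _ _) _))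
    _ ≤ ENNReal.ofReal C * μH[β - 1 / H] A + ENNReal.ofReal C * μH[β - 1 / H] A +
          ENNReal.ofReal C * μH[β - 1 / H] A := by
        rw [hmono.measure_iUnion]
        gcongr
        · exact hend a (left_mem_Icc.2 hab.le)
        · exact hend b (right_mem_Icc.2 hab.le)
        · exact iSup_le fun N => hgrid.measure_Icc_add_sub_le N ha (ha.trans hab.le) hH hc hd
            hδ_pos hδ_le_one hδ_anti hA
    _ = ENNReal.ofReal (3 * C) * μH[β - 1 / H] A := by
        rw [ENNReal.ofReal_mul (by norm_num : (0 : ℝ) ≤ 3), ofReal_ofNat]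
        ring

end GridBound

theorem stmt3_general
    {Ω : Type*} [MeasurableSpace Ω] (ℙ : Measure Ω) [IsProbabilityMeasure ℙ]
    (n : ℕ) (u : ℝ → Ω → EuclideanSpace ℝ (Fin n))
    (hu_cont : ∀ ω, ContinuousOn (fun t => u t ω) (Set.Ici (0 : ℝ)))
    (a b β M H cH : ℝ)
    (ha : 0 < a) (hab : a < b)
    (hH0 : 0 < H) (hcH : 0 < cH)
    (N₁ : ℕ)
    (hyp : ∀ z : EuclideanSpace ℝ (Fin n), (∀ i, |z i| ≤ M) →
      ∀ ε : ℝ, 0 < ε → ∀ N : ℕ, N₁ ≤ N → ∀ k : ℕ,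
        Set.Icc ((k : ℝ) * 2 ^ (-(N : ℝ) / H)) (((k : ℝ) + 1) * 2 ^ (-(N : ℝ) / H))
            ⊆ Set.Icc a b →
        ℙ {ω | ∃ t ∈ Set.Icc ((k : ℝ) * 2 ^ (-(N : ℝ) / H))
                (((k : ℝ) + 1) * 2 ^ (-(N : ℝ) / H)), ‖u t ω - z‖ < ε}
          ≤ ENNReal.ofReal (cH * ε ^ β)) :
    ∃ C : ℝ, 0 < C ∧ ∀ A : Set (EuclideanSpace ℝ (Fin n)), MeasurableSet A →
      (∀ z ∈ A, ∀ i, |z i| ≤ M) →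
      ℙ {ω | ∃ t ∈ Set.Icc a b, u t ω ∈ A}
        ≤ ENNReal.ofReal C * μH[β - 1 / H] A := by
  by_cases hd : 0 < β - 1 / H
  · set q : ℝ := 2 ^ (-1 / H)
    have hq : ∀ N : ℕ, (2 : ℝ) ^ (-(N : ℝ) / H) = q ^ N := fun N => by
      rw [← Real.rpow_natCast, ← Real.rpow_mul zero_le_two]
      ring_nf
    have hq1 : q < 1 :=
      Real.rpow_lt_one_of_one_lt_of_neg one_lt_two (div_neg_of_neg_of_pos neg_one_lt_zero hH0)
    simp only [hq] at hyp
    have hb : 0 < b := ha.trans hab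
    refine ⟨3 * ((b + 1) * cH * 2 ^ β), by positivity, fun A _ hA => ?_⟩
    have hgrid : GridHittingBound ℙ u {z | ∀ i, |z i| ≤ M} a b β cH (q ^ ·) N₁ :=
      fun z hz ε hε N hN k hk => by
        simpa only [hittingSet, mem_ball_iff_norm] using hyp z hz ε hε N hN k hk
    exact hgrid.measure_Icc_le (fun ω => (hu_cont ω).mono fun t ht => ha.le.trans ht.1) ha.le
      hab hH0 hcH hd (fun N => pow_pos (by positivity) N)
      (fun N => pow_le_one₀ (by positivity) hq1.le)
      (fun _ _ => pow_le_pow_of_le_one (by positivity) hq1.le)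
      (tendsto_pow_atTop_nhds_zero_of_lt_one (by positivity) hq1) hA
  · refine ⟨1, one_pos, fun A _ _ => ?_⟩
    rw [ofReal_one, one_mul]
    rcases A.eq_empty_or_nonempty with rfl | hA
    · simp
    · exact prob_le_one.trans (Measure.one_le_hausdorffMeasure_of_nonpos (not_lt.1 hd) hA)

/-- Upper bound on hitting probabilities in terms of Hausdorff measure:
if the probability that `u` hits the ball `B(z,ε)` during a dyadic interval of length
`2^{-N/H}` is at most `c_H ε^β`, then the probability that `u([a,b])` meets a Borel set
`A ⊆ [-M,M]ⁿ` is at most `C · ℋ_{β - 1/H}(A)`. -/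
theorem stmt3
    {Ω : Type*} [MeasurableSpace Ω] (ℙ : Measure Ω) [IsProbabilityMeasure ℙ]
    (n : ℕ) (u : ℝ → Ω → EuclideanSpace ℝ (Fin n))
    (hu_cont : ∀ ω, ContinuousOn (fun t => u t ω) (Set.Ici (0 : ℝ)))
    (a b β M H cH : ℝ)
    (ha : 0 < a) (hab : a < b) (hβ : 0 < β) (hM : 0 < M)
    (hH0 : 0 < H) (hH1 : H < 1) (hcH : 0 < cH)
    (N₁ : ℕ)
    (hyp : ∀ z : EuclideanSpace ℝ (Fin n), (∀ i, |z i| ≤ M) →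
      ∀ ε : ℝ, 0 < ε → ∀ N : ℕ, N₁ ≤ N → ∀ k : ℕ,
        Set.Icc ((k : ℝ) * 2 ^ (-(N : ℝ) / H)) (((k : ℝ) + 1) * 2 ^ (-(N : ℝ) / H))
            ⊆ Set.Icc a b →
        ℙ {ω | ∃ t ∈ Set.Icc ((k : ℝ) * 2 ^ (-(N : ℝ) / H))
                (((k : ℝ) + 1) * 2 ^ (-(N : ℝ) / H)), ‖u t ω - z‖ < ε}
          ≤ ENNReal.ofReal (cH * ε ^ β)) :
    ∃ C : ℝ, 0 < C ∧ ∀ A : Set (EuclideanSpace ℝ (Fin n)), MeasurableSet A →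
      (∀ z ∈ A, ∀ i, |z i| ≤ M) →
      ℙ {ω | ∃ t ∈ Set.Icc a b, u t ω ∈ A}
        ≤ ENNReal.ofReal C * μH[β - 1 / H] A :=
  stmt3_general ℙ n u hu_cont a b β M H cH ha hab hH0 hcH N₁ hyp
end

section
/- Let H ∈ (1/2, 1) and γ > H − 1/2. There exists a constant C > 0 (depending only on H, γ) such that for every γ-Hölder continuous function f : [0,1] → ℝ and all 0 ≤ s < t ≤ 1: ∫ₛᵗ ( ∫ᵤᵗ (v − u)^{H − 3/2} f(v) dv )² du ≥ C · (t − s)^{2H} · (min_{[0,1]} |f|)⁴ / ( ‖f‖_∞² + ‖f‖_γ² ). -/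
open MeasureTheory Set

/-- Supremum norm of `f` over `[0,1]`: `‖f‖_∞ = sup_{u ∈ [0,1]} ‖f u‖`. -/
noncomputable def supNorm01 {E : Type*} [NormedAddCommGroup E] (f : ℝ → E) : ℝ :=
  sSup ((fun u => ‖f u‖) '' Set.Icc (0 : ℝ) 1)

/-- Minimum of `‖f‖` over `[0,1]`: `min_{u ∈ [0,1]} ‖f u‖`. -/
noncomputable def minNorm01 {E : Type*} [NormedAddCommGroup E] (f : ℝ → E) : ℝ :=
  sInf ((fun u => ‖f u‖) '' Set.Icc (0 : ℝ) 1)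

/-- Hölder seminorm of exponent `γ` of `f` on `[0,1]`:
`‖f‖_γ = sup_{0 ≤ u < v ≤ 1} ‖f v - f u‖ / (v - u)^γ`. -/
noncomputable def holderNorm01 {E : Type*} [NormedAddCommGroup E] (γ : ℝ) (f : ℝ → E) : ℝ :=
  sSup {c : ℝ | ∃ u v : ℝ, 0 ≤ u ∧ u < v ∧ v ≤ 1 ∧ c = ‖f v - f u‖ / (v - u) ^ γ}

/-!
A Hölder function is continuous, so if `m = min |f| > 0` then `f` has constant sign on
`[0, 1]`, say `f ≥ m`. The inner integral is then at least `m (t - u)^(H - 1/2) / (H - 1/2)`, and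
integrating its square over `[s, t]` gives `m² (t - s)^(2H) / ((H - 1/2)² 2H)`. Since
`m ≤ ‖f‖_∞`, this dominates `m⁴ / (‖f‖_∞² + ‖f‖_γ²)` times the same factor.
-/

open Filter Topology intervalIntegral

theorem integral_sub_const_rpow {p : ℝ} (hp : -1 < p) (u t : ℝ) :
    ∫ v in u..t, (v - u) ^ p = (t - u) ^ (p + 1) / (p + 1) := by
  rw [integral_comp_sub_right (· ^ p), integral_rpow (.inl hp), sub_self,
    Real.zero_rpow (by linarith), sub_zero]

theorem integral_const_sub_rpow {p : ℝ} (hp : -1 < p) (s t : ℝ) :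
    ∫ u in s..t, (t - u) ^ p = (t - s) ^ (p + 1) / (p + 1) := by
  rw [integral_comp_sub_left (· ^ p), integral_rpow (.inl hp), sub_self,
    Real.zero_rpow (by linarith), sub_zero]

theorem intervalIntegrable_sub_const_rpow {p : ℝ} (hp : -1 < p) (u t : ℝ) :
    IntervalIntegrable (fun v => (v - u) ^ p) volume u t := by
  simpa using (intervalIntegrable_rpow' (a := u - u) (b := t - u) hp).comp_sub_right u

theorem intervalIntegrable_const_sub_rpow {p : ℝ} (hp : -1 < p) (s t : ℝ) :
    IntervalIntegrable (fun u => (t - u) ^ p) volume s t := by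
  simpa using (intervalIntegrable_rpow' (a := t - s) (b := t - t) hp).comp_sub_left t

section KernelBounds

variable {p m M u t : ℝ} {g : ℝ → ℝ}

theorem intervalIntegrable_sub_const_rpow_mul (hp : -1 < p) (hut : u ≤ t)
    (hg : ContinuousOn g (Icc u t)) :
    IntervalIntegrable (fun v => (v - u) ^ p * g v) volume u t :=
  (intervalIntegrable_sub_const_rpow hp u t).mul_continuousOn (by rwa [uIcc_of_le hut])

theorem mul_div_le_integral_sub_const_rpow_mul (hp : -1 < p) (hut : u ≤ t)
    (hg : ContinuousOn g (Icc u t)) (hm : ∀ v ∈ Icc u t, m ≤ g v) :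
    m * ((t - u) ^ (p + 1) / (p + 1)) ≤ ∫ v in u..t, (v - u) ^ p * g v := by
  rw [← integral_sub_const_rpow hp, mul_comm, ← intervalIntegral.integral_mul_const]
  refine integral_mono_on hut ((intervalIntegrable_sub_const_rpow hp u t).mul_const m)
    (intervalIntegrable_sub_const_rpow_mul hp hut hg) fun v hv => ?_
  exact mul_le_mul_of_nonneg_left (hm v hv) (Real.rpow_nonneg (by linarith [hv.1]) p)

theorem abs_integral_sub_const_rpow_mul_le (hp : -1 < p) (hut : u ≤ t)
    (hM : ∀ v ∈ Icc u t, |g v| ≤ M) :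
    |∫ v in u..t, (v - u) ^ p * g v| ≤ M * ((t - u) ^ (p + 1) / (p + 1)) := by
  rw [← integral_sub_const_rpow hp, mul_comm, ← intervalIntegral.integral_mul_const,
    ← Real.norm_eq_abs]
  refine norm_integral_le_of_norm_le hut ?_ ((intervalIntegrable_sub_const_rpow hp u t).mul_const M)
  filter_upwards with v hv
  have hvu : 0 ≤ (v - u) ^ p := Real.rpow_nonneg (by linarith [hv.1]) p
  rw [norm_mul, Real.norm_of_nonneg hvu]
  exact mul_le_mul_of_nonneg_left (hM v (Ioc_subset_Icc_self hv)) hvu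

end KernelBounds

theorem rpow_add_one_sq {x : ℝ} (hx : 0 ≤ x) (p : ℝ) : (x ^ (p + 1)) ^ 2 = x ^ (2 * p + 2) := by
  rw [← Real.rpow_natCast, ← Real.rpow_mul hx]
  ring_nf

theorem measurable_intervalIntegral_of_measurable_uncurry {F : ℝ → ℝ → ℝ}
    (hF : Measurable (Function.uncurry F)) (t : ℝ) : Measurable fun u => ∫ v in u..t, F u v := by
  have hset : ∀ S : Set (ℝ × ℝ), MeasurableSet S →
      Measurable fun u => ∫ v, S.indicator (Function.uncurry F) (u, v) := fun S hS =>
    ((hF.indicator hS).stronglyMeasurable.integral_prod_right' (ν := volume)).measurable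
  have h := (hset {q | q.1 < q.2 ∧ q.2 ≤ t} (measurableSet_lt measurable_fst measurable_snd |>.inter
      (measurableSet_le measurable_snd measurable_const))).sub
    (hset {q | t < q.2 ∧ q.2 ≤ q.1} (measurableSet_lt measurable_const measurable_snd |>.inter
      (measurableSet_le measurable_snd measurable_fst)))
  convert h using 2 with u
  rw [intervalIntegral, ← MeasureTheory.integral_indicator measurableSet_Ioc,
    ← MeasureTheory.integral_indicator measurableSet_Ioc]
  rfl

theorem le_integral_sq_integral_sub_const_rpow_mul {p m s t : ℝ} {g : ℝ → ℝ} (hp : -1 < p)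
    (hst : s ≤ t) (hg : Continuous g) (hm0 : 0 ≤ m) (hm : ∀ v ∈ Icc s t, m ≤ g v) :
    (m / (p + 1)) ^ 2 * ((t - s) ^ (2 * p + 3) / (2 * p + 3)) ≤
      ∫ u in s..t, (∫ v in u..t, (v - u) ^ p * g v) ^ 2 := by
  obtain ⟨M, hM⟩ := isCompact_Icc.exists_bound_of_continuousOn (hg.continuousOn (s := Icc s t))
  have hq : 0 < p + 1 := by linarith
  have hsub : ∀ u ∈ Icc s t, Icc u t ⊆ Icc s t := fun u hu => Icc_subset_Icc_left hu.1
  have hlow : ∀ u ∈ Icc s t,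
      (m / (p + 1)) ^ 2 * (t - u) ^ (2 * p + 2) ≤ (∫ v in u..t, (v - u) ^ p * g v) ^ 2 := by
    intro u hu
    have h := mul_div_le_integral_sub_const_rpow_mul hp hu.2 hg.continuousOn
      fun v hv => hm v (hsub u hu hv)
    calc (m / (p + 1)) ^ 2 * (t - u) ^ (2 * p + 2)
        = (m * ((t - u) ^ (p + 1) / (p + 1))) ^ 2 := by
          rw [← rpow_add_one_sq (sub_nonneg.2 hu.2)]; ring
      _ ≤ _ := pow_le_pow_left₀ (by have := hu.2; positivity) h 2
  have hup : ∀ u ∈ Icc s t,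
      (∫ v in u..t, (v - u) ^ p * g v) ^ 2 ≤ (M / (p + 1)) ^ 2 * (t - u) ^ (2 * p + 2) := by
    intro u hu
    have h := abs_integral_sub_const_rpow_mul_le hp hu.2
      fun v hv => hM v (hsub u hu hv)
    calc (∫ v in u..t, (v - u) ^ p * g v) ^ 2
        ≤ (M * ((t - u) ^ (p + 1) / (p + 1))) ^ 2 := sq_le_sq' (abs_le.1 h).1 (abs_le.1 h).2
      _ = _ := by rw [← rpow_add_one_sq (sub_nonneg.2 hu.2)]; ring
  have hint := intervalIntegrable_const_sub_rpow (p := 2 * p + 2) (by linarith) s t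
  have hmeas : Measurable fun u => (∫ v in u..t, (v - u) ^ p * g v) ^ 2 :=
    (measurable_intervalIntegral_of_measurable_uncurry (by fun_prop) t).pow_const 2
  have hsq : IntervalIntegrable (fun u => (∫ v in u..t, (v - u) ^ p * g v) ^ 2) volume s t := by
    refine (hint.const_mul ((M / (p + 1)) ^ 2)).mono_fun' hmeas.aestronglyMeasurable ?_
    rw [uIoc_of_le hst]
    filter_upwards [ae_restrict_mem measurableSet_Ioc] with u hu
    rw [Real.norm_of_nonneg (sq_nonneg _)]
    exact hup u (Ioc_subset_Icc_self hu)
  calc (m / (p + 1)) ^ 2 * ((t - s) ^ (2 * p + 3) / (2 * p + 3))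
      = ∫ u in s..t, (m / (p + 1)) ^ 2 * (t - u) ^ (2 * p + 2) := by
        rw [intervalIntegral.integral_const_mul, integral_const_sub_rpow (by linarith)]
        ring_nf
    _ ≤ _ := integral_mono_on hst (hint.const_mul _) hsq hlow

theorem ContinuousOn.exists_continuous_eqOn_Icc {f : ℝ → ℝ} {a b : ℝ} (hab : a ≤ b)
    (hf : ContinuousOn f (Icc a b)) : ∃ g : ℝ → ℝ, Continuous g ∧ EqOn g f (Icc a b) :=
  ⟨IccExtend hab ((Icc a b).domRestrict f), hf.domRestrict.Icc_extend',
    fun _ hx => IccExtend_of_mem _ _ hx⟩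

theorem le_integral_sq_integral_sub_const_rpow_mul_of_le_abs {p m s t : ℝ} {f : ℝ → ℝ}
    (hp : -1 < p) (hst : s ≤ t) (hf : ContinuousOn f (Icc s t)) (hm0 : 0 < m)
    (hm : ∀ v ∈ Icc s t, m ≤ |f v|) :
    (m / (p + 1)) ^ 2 * ((t - s) ^ (2 * p + 3) / (2 * p + 3)) ≤
      ∫ u in s..t, (∫ v in u..t, (v - u) ^ p * f v) ^ 2 := by
  -- `f` may be non-measurable off `[s, t]`, which the integrals never see: pass to a continuous
  -- extension.
  obtain ⟨g, hg, hgf⟩ := hf.exists_continuous_eqOn_Icc hst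
  have hfg : ∫ u in s..t, (∫ v in u..t, (v - u) ^ p * g v) ^ 2 =
      ∫ u in s..t, (∫ v in u..t, (v - u) ^ p * f v) ^ 2 := by
    refine intervalIntegral.integral_congr fun u hu => ?_
    rw [uIcc_of_le hst] at hu
    refine congrArg (· ^ 2) (intervalIntegral.integral_congr fun v hv => ?_)
    rw [uIcc_of_le hu.2] at hv
    simp only [hgf (Icc_subset_Icc_left hu.1 hv)]
  rw [← hfg]
  replace hm : ∀ v ∈ Icc s t, m ≤ |g v| := fun v hv => (hm v hv).trans_eq (by rw [hgf hv])
  rcases isPreconnected_Icc.eq_or_eq_neg_of_sq_eq hg.continuousOn hg.abs.continuousOn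
    (fun v _ => (sq_abs (g v)).symm) (fun hv => (hm0.trans_le (hm _ hv)).ne') with h | h
  · exact le_integral_sq_integral_sub_const_rpow_mul hp hst hg hm0.le
      fun v hv => (hm v hv).trans_eq (h hv).symm
  · have := le_integral_sq_integral_sub_const_rpow_mul (g := fun v => -g v) hp hst hg.neg hm0.le
      fun v hv => by have := h hv; simp only [Pi.neg_apply] at this; linarith [hm v hv]
    simpa only [mul_neg, intervalIntegral.integral_neg, neg_sq] using this

theorem continuousOn_of_abs_sub_le_mul_rpow {f : ℝ → ℝ} {s : Set ℝ} {K γ : ℝ} (hγ : 0 < γ)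
    (hf : ∀ u ∈ s, ∀ v ∈ s, |f v - f u| ≤ K * |v - u| ^ γ) : ContinuousOn f s := by
  intro u hu
  have hlim : Tendsto (fun v => K * |v - u| ^ γ) (𝓝[s] u) (𝓝 0) := by
    have : ContinuousAt (fun v => K * |v - u| ^ γ) u := by
      fun_prop (disch := exact Or.inr hγ.le)
    simpa [Real.zero_rpow hγ.ne'] using this.tendsto.mono_left nhdsWithin_le_nhds
  refine tendsto_iff_dist_tendsto_zero.2 (squeeze_zero' (.of_forall fun _ => dist_nonneg) ?_ hlim)
  filter_upwards [self_mem_nhdsWithin] with v hv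
  exact (Real.dist_eq _ _).trans_le (hf u hu v hv)

theorem pow_four_div_le_sq {m M : ℝ} (hm : 0 ≤ m) (hmM : m ≤ M) (h : ℝ) :
    m ^ 4 / (M ^ 2 + h ^ 2) ≤ m ^ 2 := by
  refine div_le_of_le_mul₀ (by positivity) (sq_nonneg m) ?_
  have : m ^ 2 ≤ M ^ 2 := pow_le_pow_left₀ hm hmM 2
  nlinarith [sq_nonneg h, sq_nonneg m]

section Norms01

variable {E : Type*} [NormedAddCommGroup E]

theorem minNorm01_nonneg (f : ℝ → E) : 0 ≤ minNorm01 f :=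
  Real.sInf_nonneg (by rintro _ ⟨u, -, rfl⟩; exact norm_nonneg _)

theorem minNorm01_le (f : ℝ → E) {u : ℝ} (hu : u ∈ Icc 0 1) : minNorm01 f ≤ ‖f u‖ :=
  csInf_le ⟨0, by rintro _ ⟨v, -, rfl⟩; exact norm_nonneg _⟩ ⟨u, hu, rfl⟩

theorem ContinuousOn.norm_le_supNorm01 {f : ℝ → E} (hf : ContinuousOn f (Icc 0 1)) {u : ℝ}
    (hu : u ∈ Icc 0 1) : ‖f u‖ ≤ supNorm01 f :=
  le_csSup (isCompact_Icc.image_of_continuousOn hf.norm).bddAbove ⟨u, hu, rfl⟩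

end Norms01

theorem stmt8_general (H γ : ℝ) (hH : 1 / 2 < H) (hγ : H - 1 / 2 < γ) :
    ∃ C : ℝ, 0 < C ∧
      ∀ f : ℝ → ℝ,
        (∃ K : ℝ, ∀ u ∈ Set.Icc (0 : ℝ) 1, ∀ v ∈ Set.Icc (0 : ℝ) 1,
            |f v - f u| ≤ K * |v - u| ^ γ) →
        ∀ s t : ℝ, 0 ≤ s → s < t → t ≤ 1 →
          C * (t - s) ^ (2 * H) * minNorm01 f ^ 4
              / (supNorm01 f ^ 2 + holderNorm01 γ f ^ 2)
            ≤ ∫ u in s..t, (∫ v in u..t, (v - u) ^ (H - 3 / 2) * f v) ^ 2 := by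
  have hq : 0 < H - 1 / 2 := by linarith
  refine ⟨1 / ((H - 1 / 2) ^ 2 * (2 * H)), by positivity, ?_⟩
  rintro f ⟨K, hK⟩ s t hs hst ht
  have hf := continuousOn_of_abs_sub_le_mul_rpow (hq.trans hγ) hK
  rcases (minNorm01_nonneg f).eq_or_lt with hm | hm
  · rw [← hm]
    simpa using intervalIntegral.integral_nonneg hst.le fun u _ => sq_nonneg _
  have hsub : Icc s t ⊆ Icc 0 1 := Icc_subset_Icc hs ht
  have key := le_integral_sq_integral_sub_const_rpow_mul_of_le_abs (p := H - 3 / 2)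
    (by linarith) hst.le (hf.mono hsub) hm fun v hv => minNorm01_le f (hsub hv)
  rw [show H - 3 / 2 + 1 = H - 1 / 2 by ring, show 2 * (H - 3 / 2) + 3 = 2 * H by ring] at key
  have h0 : (0 : ℝ) ∈ Icc 0 1 := ⟨le_rfl, zero_le_one⟩
  have hmM := (minNorm01_le f h0).trans (hf.norm_le_supNorm01 h0)
  calc _ ≤ 1 / ((H - 1 / 2) ^ 2 * (2 * H)) * (t - s) ^ (2 * H) * minNorm01 f ^ 2 := by
        rw [mul_div_assoc]
        gcongr
        exact pow_four_div_le_sq hm.le hmM _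
    _ = (minNorm01 f / (H - 1 / 2)) ^ 2 * ((t - s) ^ (2 * H) / (2 * H)) := by field_simp
    _ ≤ _ := key

/-- For `H ∈ (1/2,1)` and `γ > H - 1/2` there is `C > 0` such that
for every `γ`-Hölder `f : [0,1] → ℝ` and all `0 ≤ s < t ≤ 1`,
`∫ₛᵗ (∫ᵤᵗ (v-u)^{H-3/2} f(v) dv)² du
  ≥ C (t-s)^{2H} (min |f|)⁴ / (‖f‖_∞² + ‖f‖_γ²)`. -/
theorem stmt8 (H γ : ℝ) (hH : 1 / 2 < H) (hH1 : H < 1) (hγ : H - 1 / 2 < γ) :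
    ∃ C : ℝ, 0 < C ∧
      ∀ f : ℝ → ℝ,
        (∃ K : ℝ, ∀ u ∈ Set.Icc (0 : ℝ) 1, ∀ v ∈ Set.Icc (0 : ℝ) 1,
            |f v - f u| ≤ K * |v - u| ^ γ) →
        ∀ s t : ℝ, 0 ≤ s → s < t → t ≤ 1 →
          C * (t - s) ^ (2 * H) * minNorm01 f ^ 4
              / (supNorm01 f ^ 2 + holderNorm01 γ f ^ 2)
            ≤ ∫ u in s..t, (∫ v in u..t, (v - u) ^ (H - 3 / 2) * f v) ^ 2 :=
  stmt8_general H γ hH hγ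
end

section
/- Let H ∈ (0, 1/2] and let R(s, t) = ½ ( s^{2H} + t^{2H} − |t − s|^{2H} ) for s, t ∈ [0,1] be the covariance function of fractional Brownian motion with Hurst parameter H. Then for every ρ ≥ 1/(2H), the two-dimensional ρ-variation of R is finite: V_ρ(R) = sup { ( Σ_{i,j} | R(s_{i+1}, t_{j+1}) − R(s_i, t_{j+1}) − R(s_{i+1}, t_j) + R(s_i, t_j) |^ρ )^{1/ρ} : (s_i), (t_j) partitions of [0,1] } < ∞. -/
open MeasureTheory Set

/-- The covariance function of fractional Brownian motion with Hurst parameter `H`: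
`R(s,t) = ½ (s^{2H} + t^{2H} - |t-s|^{2H})`. -/
noncomputable def fbmCov (H s t : ℝ) : ℝ :=
  (s ^ (2 * H) + t ^ (2 * H) - |t - s| ^ (2 * H)) / 2

/-!
Fix a row `[x, y]` of the first partition and put `p = 2H`. As a function of `(a, b)`, the
rectangular increment of `R` over `[x, y] × [a, b]` is `(g b - g a) / 2` with
`g u = |u - x|^p - |u - y|^p`. Since `p ≤ 1`, `u ↦ u^p` is `p`-Hölder, so `|g| ≤ (y - x)^p`, and
by concavity `g` is monotone on each of `[0, x]`, `[x, y]`, `[y, 1]`; hence the total variation of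
`g` on `[0, 1]` is at most `6 (y - x)^p`. As `ρ ≥ 1`, the row contributes at most
`(3 (y - x)^p)^ρ ≤ 3^ρ (y - x)`, because `pρ ≥ 1` and `y - x ≤ 1`. Summing over the rows gives
`V_ρ(R)^ρ ≤ 3^ρ`.
-/

theorem ConcaveOn.add_le_add_add_sub {f : ℝ → ℝ} {s : Set ℝ} (hf : ConcaveOn ℝ s f) {a b d : ℝ}
    (ha : a ∈ s) (hd : d ∈ s) (hab : a ≤ b) (hbd : b ≤ d) :
    f a + f d ≤ f b + f (a + d - b) := by
  rcases (hab.trans hbd).eq_or_lt with rfl | had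
  · obtain rfl : b = a := le_antisymm hbd hab
    simp
  have hda : 0 < d - a := sub_pos.2 had
  set μ := (b - a) / (d - a)
  have hμd : μ * (d - a) = b - a := div_mul_cancel₀ _ hda.ne'
  have hμ0 : 0 ≤ μ := div_nonneg (sub_nonneg.2 hab) hda.le
  have hμ1 : 0 ≤ 1 - μ := sub_nonneg.2 ((div_le_one hda).2 (by linarith))
  have hb := hf.2 ha hd hμ1 hμ0 (by ring)
  have hc := hf.2 ha hd hμ0 hμ1 (by ring)
  simp only [smul_eq_mul] at hb hc
  rw [show (1 - μ) * a + μ * d = b by linear_combination hμd] at hb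
  rw [show μ * a + (1 - μ) * d = a + d - b by linear_combination -hμd] at hc
  linarith

theorem Real.antitoneOn_rpow_add_sub_rpow {p h : ℝ} (hp0 : 0 ≤ p) (hp1 : p ≤ 1) (hh : 0 ≤ h) :
    AntitoneOn (fun v : ℝ => (v + h) ^ p - v ^ p) (Ici 0) := by
  intro v hv w hw hvw
  have key := (Real.concaveOn_rpow hp0 hp1).add_le_add_add_sub hv
    (mem_Ici.2 (add_nonneg (mem_Ici.1 hw) hh)) hvw (le_add_of_nonneg_right hh)
  rw [show v + (w + h) - w = v + h by ring] at key
  linarith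

theorem Real.abs_rpow_sub_rpow_le {p a b : ℝ} (hp0 : 0 ≤ p) (hp1 : p ≤ 1) (ha : 0 ≤ a)
    (hb : 0 ≤ b) : |a ^ p - b ^ p| ≤ |a - b| ^ p := by
  wlog hba : b ≤ a generalizing a b
  · rw [abs_sub_comm, abs_sub_comm a]
    exact this hb ha (le_of_not_ge hba)
  have hsub : a ^ p ≤ b ^ p + (a - b) ^ p := by
    simpa using Real.rpow_add_le_add_rpow hb (sub_nonneg.2 hba) hp0 hp1
  rw [abs_of_nonneg (sub_nonneg.2 (Real.rpow_le_rpow hb hba hp0)),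
    abs_of_nonneg (sub_nonneg.2 hba)]
  linarith

theorem Real.sum_rpow_le_rpow_sum {ι : Type*} (s : Finset ι) {f : ι → ℝ}
    (hf : ∀ i ∈ s, 0 ≤ f i) {p : ℝ} (hp : 1 ≤ p) :
    ∑ i ∈ s, f i ^ p ≤ (∑ i ∈ s, f i) ^ p := by
  classical
  induction s using Finset.induction_on with
  | empty => simp [Real.zero_rpow (by linarith : p ≠ 0)]
  | insert i s hi ih =>
    rw [Finset.sum_insert hi, Finset.sum_insert hi]
    have hs : ∀ j ∈ s, 0 ≤ f j := fun j hj => hf j (Finset.mem_insert_of_mem hj)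
    calc f i ^ p + ∑ j ∈ s, f j ^ p ≤ f i ^ p + (∑ j ∈ s, f j) ^ p := by gcongr; exact ih hs
      _ ≤ (f i + ∑ j ∈ s, f j) ^ p :=
        Real.add_rpow_le_rpow_add (hf i (Finset.mem_insert_self i s)) (Finset.sum_nonneg hs) hp

theorem AntitoneOn.eVariationOn_eq {α : Type*} [LinearOrder α] {f : α → ℝ} {s : Set α} {a b : α}
    (hf : AntitoneOn f s) (as : a ∈ s) (bs : b ∈ s) :
    eVariationOn f (s ∩ Icc a b) = ENNReal.ofReal (f a - f b) := by
  have hneg : eVariationOn (fun x => -f x) (s ∩ Icc a b) = eVariationOn f (s ∩ Icc a b) := by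
    simp only [eVariationOn, edist_neg_neg]
  rw [← hneg, hf.neg.eVariationOn_eq as bs, neg_sub_neg]

theorem ofReal_sum_abs_sub_le_eVariationOn {α : Type*} [LinearOrder α] (f : α → ℝ) {s : Set α}
    {u : ℕ → α} {n : ℕ} (hu : MonotoneOn u (Iic n)) (us : ∀ i ≤ n, u i ∈ s) :
    ENNReal.ofReal (∑ i ∈ Finset.range n, |f (u (i + 1)) - f (u i)|) ≤ eVariationOn f s := by
  rw [ENNReal.ofReal_sum_of_nonneg fun _ _ => abs_nonneg _, Finset.range_eq_Ico]
  simpa [edist_dist, Real.dist_eq] using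
    eVariationOn.sum_le_of_monotoneOn_Icc (f := f) (m := 0) (hu.mono Icc_subset_Iic_self)
      fun i hi => us i hi.2

noncomputable def distPowDiff (p x y u : ℝ) : ℝ :=
  |u - x| ^ p - |u - y| ^ p

theorem fbmCov_rect_eq (H x y a b : ℝ) :
    fbmCov H y b - fbmCov H x b - fbmCov H y a + fbmCov H x a
      = (distPowDiff (2 * H) x y b - distPowDiff (2 * H) x y a) / 2 := by
  unfold fbmCov distPowDiff
  ring

section distPowDiff

variable {p x y : ℝ}

theorem abs_distPowDiff_le (hp0 : 0 ≤ p) (hp1 : p ≤ 1) (hxy : x ≤ y) (u : ℝ) :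
    |distPowDiff p x y u| ≤ (y - x) ^ p :=
  calc |distPowDiff p x y u| ≤ |(|u - x| - |u - y|)| ^ p :=
        Real.abs_rpow_sub_rpow_le hp0 hp1 (abs_nonneg _) (abs_nonneg _)
    _ ≤ |(u - x) - (u - y)| ^ p :=
        Real.rpow_le_rpow (abs_nonneg _) (abs_abs_sub_abs_le_abs_sub _ _) hp0
    _ = (y - x) ^ p := by
        rw [show (u - x) - (u - y) = y - x by ring, abs_of_nonneg (sub_nonneg.2 hxy)]

theorem antitoneOn_distPowDiff_Iic (hp0 : 0 ≤ p) (hp1 : p ≤ 1) (hxy : x ≤ y) :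
    AntitoneOn (distPowDiff p x y) (Iic x) := by
  intro u hu v hv huv
  have key := Real.antitoneOn_rpow_add_sub_rpow hp0 hp1 (sub_nonneg.2 hxy)
    (mem_Ici.2 (sub_nonneg.2 (mem_Iic.1 hv))) (mem_Ici.2 (sub_nonneg.2 (mem_Iic.1 hu)))
    (sub_le_sub_left huv x)
  simp only [distPowDiff, abs_sub_comm _ x, abs_sub_comm _ y,
    abs_of_nonneg (sub_nonneg.2 (mem_Iic.1 hu)), abs_of_nonneg (sub_nonneg.2 (mem_Iic.1 hv)),
    abs_of_nonneg (sub_nonneg.2 ((mem_Iic.1 hu).trans hxy)),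
    abs_of_nonneg (sub_nonneg.2 ((mem_Iic.1 hv).trans hxy))]
  simp only at key
  rw [show x - u + (y - x) = y - u by ring, show x - v + (y - x) = y - v by ring] at key
  linarith

theorem monotoneOn_distPowDiff_Icc (hp0 : 0 ≤ p) : MonotoneOn (distPowDiff p x y) (Icc x y) := by
  rintro u ⟨hxu, huy⟩ v ⟨hxv, hvy⟩ huv
  simp only [distPowDiff, abs_sub_comm _ y, abs_of_nonneg (sub_nonneg.2 hxu),
    abs_of_nonneg (sub_nonneg.2 hxv), abs_of_nonneg (sub_nonneg.2 huy),
    abs_of_nonneg (sub_nonneg.2 hvy)]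
  gcongr

theorem antitoneOn_distPowDiff_Ici (hp0 : 0 ≤ p) (hp1 : p ≤ 1) (hxy : x ≤ y) :
    AntitoneOn (distPowDiff p x y) (Ici y) := by
  intro u hu v hv huv
  have key := Real.antitoneOn_rpow_add_sub_rpow hp0 hp1 (sub_nonneg.2 hxy)
    (mem_Ici.2 (sub_nonneg.2 (mem_Ici.1 hu))) (mem_Ici.2 (sub_nonneg.2 (mem_Ici.1 hv)))
    (sub_le_sub_right huv y)
  simp only [distPowDiff, abs_of_nonneg (sub_nonneg.2 (mem_Ici.1 hu)),
    abs_of_nonneg (sub_nonneg.2 (mem_Ici.1 hv)),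
    abs_of_nonneg (sub_nonneg.2 (hxy.trans (mem_Ici.1 hu))),
    abs_of_nonneg (sub_nonneg.2 (hxy.trans (mem_Ici.1 hv)))]
  simp only at key
  rw [show u - y + (y - x) = u - x by ring, show v - y + (y - x) = v - x by ring] at key
  exact key

theorem eVariationOn_distPowDiff_le (hp0 : 0 ≤ p) (hp1 : p ≤ 1) {a b : ℝ} (hax : a ≤ x)
    (hxy : x ≤ y) (hyb : y ≤ b) :
    eVariationOn (distPowDiff p x y) (Icc a b) ≤ ENNReal.ofReal (6 * (y - x) ^ p) := by
  set g := distPowDiff p x y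
  have osc : ∀ u v, g u - g v ≤ 2 * (y - x) ^ p := fun u v => by
    linarith [abs_le.1 (abs_distPowDiff_le hp0 hp1 hxy u),
      abs_le.1 (abs_distPowDiff_le hp0 hp1 hxy v)]
  have split : eVariationOn g (Icc a b)
      = eVariationOn g (Icc a x) + eVariationOn g (Icc x y) + eVariationOn g (Icc y b) := by
    have h1 := eVariationOn.Icc_add_Icc g (s := univ) hax (hxy.trans hyb) (mem_univ x)
    have h2 := eVariationOn.Icc_add_Icc g (s := univ) hxy hyb (mem_univ y)
    simp only [univ_inter] at h1 h2
    rw [← h1, ← h2, add_assoc]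
  have hA : eVariationOn g (Icc a x) = ENNReal.ofReal (g a - g x) := by
    simpa using ((antitoneOn_distPowDiff_Iic hp0 hp1 hxy).mono Icc_subset_Iic_self).eVariationOn_eq
      (left_mem_Icc.2 hax) (right_mem_Icc.2 hax)
  have hB : eVariationOn g (Icc x y) = ENNReal.ofReal (g y - g x) := by
    simpa using (monotoneOn_distPowDiff_Icc hp0).eVariationOn_eq
      (left_mem_Icc.2 hxy) (right_mem_Icc.2 hxy)
  have hC : eVariationOn g (Icc y b) = ENNReal.ofReal (g y - g b) := by
    simpa using ((antitoneOn_distPowDiff_Ici hp0 hp1 hxy).mono Icc_subset_Ici_self).eVariationOn_eq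
      (left_mem_Icc.2 hyb) (right_mem_Icc.2 hyb)
  have h2 : 0 ≤ 2 * (y - x) ^ p := by have := Real.rpow_nonneg (sub_nonneg.2 hxy) p; positivity
  calc eVariationOn g (Icc a b)
      ≤ ENNReal.ofReal (2 * (y - x) ^ p) + ENNReal.ofReal (2 * (y - x) ^ p)
          + ENNReal.ofReal (2 * (y - x) ^ p) := by
        rw [split, hA, hB, hC]
        gcongr <;> exact osc _ _
    _ = ENNReal.ofReal (6 * (y - x) ^ p) := by
        rw [← ENNReal.ofReal_add h2 h2, ← ENNReal.ofReal_add (by positivity) h2]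
        ring_nf

end distPowDiff

theorem sum_abs_fbmCov_rect_rpow_le {H ρ x y : ℝ} {l : ℕ} {t : ℕ → ℝ} (hH0 : 0 ≤ H)
    (hH : H ≤ 1 / 2) (hρ : 1 ≤ ρ) (hHρ : 1 ≤ 2 * H * ρ) (hx : 0 ≤ x) (hxy : x ≤ y) (hy : y ≤ 1)
    (ht : MonotoneOn t (Iic l)) (ht01 : ∀ j ≤ l, t j ∈ Icc (0 : ℝ) 1) :
    ∑ j ∈ Finset.range l, |fbmCov H y (t (j + 1)) - fbmCov H x (t (j + 1))
        - fbmCov H y (t j) + fbmCov H x (t j)| ^ ρ ≤ 3 ^ ρ * (y - x) := by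
  have hp0 : 0 ≤ 2 * H := by linarith
  have hp1 : 2 * H ≤ 1 := by linarith
  have hyx : 0 ≤ y - x := sub_nonneg.2 hxy
  have hrow : ∑ j ∈ Finset.range l, |fbmCov H y (t (j + 1)) - fbmCov H x (t (j + 1))
      - fbmCov H y (t j) + fbmCov H x (t j)| ≤ 3 * (y - x) ^ (2 * H) := by
    have hvar := (ofReal_sum_abs_sub_le_eVariationOn _ ht ht01).trans
      (eVariationOn_distPowDiff_le hp0 hp1 hx hxy hy)
    rw [ENNReal.ofReal_le_ofReal_iff (by positivity)] at hvar
    simp only [fbmCov_rect_eq, abs_div, abs_two, ← Finset.sum_div]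
    linarith
  calc ∑ j ∈ Finset.range l, |fbmCov H y (t (j + 1)) - fbmCov H x (t (j + 1))
        - fbmCov H y (t j) + fbmCov H x (t j)| ^ ρ
      ≤ (∑ j ∈ Finset.range l, |fbmCov H y (t (j + 1)) - fbmCov H x (t (j + 1))
        - fbmCov H y (t j) + fbmCov H x (t j)|) ^ ρ :=
        Real.sum_rpow_le_rpow_sum _ (fun _ _ => abs_nonneg _) hρ
    _ ≤ (3 * (y - x) ^ (2 * H)) ^ ρ := by gcongr
    _ = 3 ^ ρ * (y - x) ^ (2 * H * ρ) := by
        rw [Real.mul_rpow (by norm_num) (by positivity), ← Real.rpow_mul hyx]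
    _ ≤ 3 ^ ρ * (y - x) ^ (1 : ℝ) := mul_le_mul_of_nonneg_left
        (Real.rpow_le_rpow_of_exponent_ge' hyx (by linarith) zero_le_one hHρ) (by positivity)
    _ = 3 ^ ρ * (y - x) := by rw [Real.rpow_one]

theorem MonotoneOn.mem_Icc_of_le {α : Type*} [Preorder α] {u : ℕ → α} {n i : ℕ}
    (hu : MonotoneOn u (Iic n)) (hi : i ≤ n) : u i ∈ Icc (u 0) (u n) :=
  ⟨hu (mem_Iic.2 (Nat.zero_le n)) hi (Nat.zero_le i), hu hi (mem_Iic.2 le_rfl) hi⟩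

/-- For `H ∈ (0, 1/2]` and `ρ ≥ 1/(2H)`, the two-dimensional
`ρ`-variation of the fBm covariance `R` on `[0,1]²` is finite: there is a constant `C`
bounding, over all pairs of partitions `(s_i)_{i ≤ m}`, `(t_j)_{j ≤ l}` of `[0,1]`, the
sums `Σ_{i,j} |R(s_{i+1},t_{j+1}) - R(s_i,t_{j+1}) - R(s_{i+1},t_j) + R(s_i,t_j)|^ρ`. -/
theorem stmt14 (H ρ : ℝ) (hH0 : 0 < H) (hH : H ≤ 1 / 2) (hρ : 1 / (2 * H) ≤ ρ) :
    ∃ C : ℝ, ∀ (m l : ℕ) (s t : ℕ → ℝ),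
      s 0 = 0 → s m = 1 → (∀ i < m, s i < s (i + 1)) →
      t 0 = 0 → t l = 1 → (∀ j < l, t j < t (j + 1)) →
      (∑ i ∈ Finset.range m, ∑ j ∈ Finset.range l,
          |fbmCov H (s (i + 1)) (t (j + 1)) - fbmCov H (s i) (t (j + 1))
            - fbmCov H (s (i + 1)) (t j) + fbmCov H (s i) (t j)| ^ ρ)
        ≤ C := by
  have hHρ : 1 ≤ 2 * H * ρ := by rwa [div_le_iff₀' (by positivity)] at hρ
  have hρ1 : 1 ≤ ρ := by nlinarith
  refine ⟨3 ^ ρ, fun m l s t hs0 hsm hs ht0 htl ht => ?_⟩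
  have hs_mono : MonotoneOn s (Iic m) := (strictMonoOn_Iic_of_lt_succ hs).monotoneOn
  have ht_mono : MonotoneOn t (Iic l) := (strictMonoOn_Iic_of_lt_succ ht).monotoneOn
  have hrow : ∀ i ∈ Finset.range m, ∑ j ∈ Finset.range l,
      |fbmCov H (s (i + 1)) (t (j + 1)) - fbmCov H (s i) (t (j + 1))
        - fbmCov H (s (i + 1)) (t j) + fbmCov H (s i) (t j)| ^ ρ ≤ 3 ^ ρ * (s (i + 1) - s i) := by
    intro i hi
    have him := Finset.mem_range.1 hi
    have hxi := hs0 ▸ hsm ▸ hs_mono.mem_Icc_of_le him.le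
    have hyi := hs0 ▸ hsm ▸ hs_mono.mem_Icc_of_le him
    exact sum_abs_fbmCov_rect_rpow_le hH0.le hH hρ1 hHρ hxi.1 (hs i him).le hyi.2 ht_mono
      fun j hj => ht0 ▸ htl ▸ ht_mono.mem_Icc_of_le hj
  calc _ ≤ ∑ i ∈ Finset.range m, 3 ^ ρ * (s (i + 1) - s i) := Finset.sum_le_sum hrow
    _ = 3 ^ ρ := by rw [← Finset.mul_sum, Finset.sum_range_sub, hsm, hs0, sub_zero, mul_one]
end
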